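/- arXiv:quant-ph/0504048 — 9 statements merged into one kernel-verified Lean document; each statement's English description precedes it below -/
import Mathlib

section
/- Let ρ₁, ρ₂ be quantum states on ℂ^d and let 0 ≤ a < b ≤ 1. If (P₁^a, P₂^a) is a Bayes-optimal two-outcome POVM for the prior (a, 1−a) and (P₁^b, P₂^b) is a Bayes-optimal two-outcome POVM for the prior (b, 1−b), then Tr[ρ₁P₁^a] − Tr[ρ₂P₂^a] ≤ Tr[ρ₁P₁^b] − Tr[ρ₂P₂^b]. That is, the function f(a) = Tr[ρ₁P₁^a] − Tr[ρ₂P₂^a] is monotonically nondecreasing in the prior parameter a. -/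
open Matrix ComplexOrder

/-- A quantum state on `ℂ^d`: a positive semidefinite matrix with unit trace. -/
def IsQState {d : ℕ} (ρ : Matrix (Fin d) (Fin d) ℂ) : Prop :=
  ρ.PosSemidef ∧ ρ.trace = 1

/-- A two-outcome POVM: two positive semidefinite matrices summing to the identity. -/
def IsPOVM2 {d : ℕ} (P₁ P₂ : Matrix (Fin d) (Fin d) ℂ) : Prop :=
  P₁.PosSemidef ∧ P₂.PosSemidef ∧ P₁ + P₂ = 1

/-- `(B₁, B₂)` is Bayes-optimal for the prior `(a, 1-a)` and states `ρ₁, ρ₂`: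
it is a POVM maximizing `a·Tr[ρ₁P₁] + (1-a)·Tr[ρ₂P₂]` over all two-outcome POVMs. -/
def IsBayesOpt {d : ℕ} (ρ₁ ρ₂ : Matrix (Fin d) (Fin d) ℂ) (a : ℝ)
    (B₁ B₂ : Matrix (Fin d) (Fin d) ℂ) : Prop :=
  IsPOVM2 B₁ B₂ ∧ ∀ P₁ P₂ : Matrix (Fin d) (Fin d) ℂ, IsPOVM2 P₁ P₂ →
    a * ((ρ₁ * P₁).trace.re) + (1 - a) * ((ρ₂ * P₂).trace.re) ≤
      a * ((ρ₁ * B₁).trace.re) + (1 - a) * ((ρ₂ * B₂).trace.re)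

/-- The difference `Tr[ρ₁P₁^a] − Tr[ρ₂P₂^a]` of the probabilities of correct
detection of a Bayes-optimal POVM is monotonically nondecreasing in the prior parameter. -/
theorem bayes_opt_detection_difference_monotone
    {d : ℕ} (ρ₁ ρ₂ : Matrix (Fin d) (Fin d) ℂ)
    (hρ₁ : IsQState ρ₁) (hρ₂ : IsQState ρ₂)
    (a b : ℝ) (ha : 0 ≤ a) (hab : a < b) (hb : b ≤ 1)
    (Pa₁ Pa₂ Pb₁ Pb₂ : Matrix (Fin d) (Fin d) ℂ)
    (hPa : IsBayesOpt ρ₁ ρ₂ a Pa₁ Pa₂)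
    (hPb : IsBayesOpt ρ₁ ρ₂ b Pb₁ Pb₂) :
    (ρ₁ * Pa₁).trace.re - (ρ₂ * Pa₂).trace.re ≤
      (ρ₁ * Pb₁).trace.re - (ρ₂ * Pb₂).trace.re := by
  have h1 := hPa.2 Pb₁ Pb₂ hPb.1
  have h2 := hPb.2 Pa₁ Pa₂ hPa.1
  nlinarith [h1, h2, sub_pos.mpr hab]
end

section
/- Let ρ₁, ρ₂ be quantum states on ℂ^d. Then there exist a₀ ∈ [0,1] and a two-outcome POVM (B₁, B₂) that is Bayes-optimal for the prior (a₀, 1−a₀) and satisfies Tr[ρ₁B₁] = Tr[ρ₂B₂]. -/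
open Matrix ComplexOrder

/-! The Bayes success probability of the POVM `(P, 1 - P)` is `a u(P) + (1 - a) v(P)` with
the affine functionals `u(P) = Tr ρ₁P` and `v(P) = Tr ρ₂(1 - P)` on the compact convex set of
effects `0 ≤ P ≤ 1`. For `a = 0` the effect `0` is optimal and has `u ≤ v`; for `a = 1` the
effect `1` is optimal and has `v ≤ u`. The priors admitting an optimal effect with `u ≤ v`,
resp. `v ≤ u`, form two closed subsets of `[0,1]` (the argmax correspondence has a closed graph
over a compact set) which cover `[0,1]`, so by connectedness some prior `a₀` admits both. The
optimal effects at `a₀` form a convex set on which `u - v` changes sign, so it vanishes at one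
of them. -/

open Set

theorem isClosed_setOf_exists_isMaxOn_mem {X Y β : Type*} [TopologicalSpace X] [T2Space X]
    [TopologicalSpace Y] [TopologicalSpace β] [Preorder β] [OrderClosedTopology β]
    {f : X → Y → β} (hf : Continuous (Function.uncurry f)) {s : Set X} (hs : IsCompact s)
    {K C : Set Y} (hK : IsCompact K) (hC : IsClosed C) :
    IsClosed {a ∈ s | ∃ x ∈ K, IsMaxOn (f a) K x ∧ x ∈ C} := by
  have hmax : IsClosed {p : X × Y | IsMaxOn (f p.1) K p.2} := by
    simp only [IsMaxOn, IsMaxFilter, Filter.eventually_principal, ofPred_forall]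
    exact isClosed_biInter fun y _ =>
      isClosed_le (hf.comp (continuous_fst.prodMk continuous_const)) hf
  have hL : IsCompact (s ×ˢ (K ∩ C) ∩ {p | IsMaxOn (f p.1) K p.2}) :=
    (hs.prod (hK.inter_right hC)).inter_right hmax
  convert (hL.image continuous_fst).isClosed using 1
  ext a
  simp only [mem_ofPred_eq, mem_image, mem_inter_iff, mem_prod, Prod.exists]
  constructor
  · rintro ⟨ha, x, hxK, hxmax, hxC⟩
    exact ⟨a, x, ⟨⟨ha, hxK, hxC⟩, hxmax⟩, rfl⟩
  · rintro ⟨a, x, ⟨⟨ha, hxK, hxC⟩, hxmax⟩, rfl⟩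
    exact ⟨ha, x, hxK, hxmax, hxC⟩

theorem ConcaveOn.exists_isMaxOn_eq {E : Type*} [AddCommGroup E] [Module ℝ E]
    [TopologicalSpace E] [ContinuousAdd E] [ContinuousSMul ℝ E] {K : Set E} {F g : E → ℝ}
    (hF : ConcaveOn ℝ K F) (hg : ContinuousOn g K) {x y : E} (hx : x ∈ K) (hy : y ∈ K)
    (hxF : IsMaxOn F K x) (hyF : IsMaxOn F K y) {c : ℝ} (hgx : g x ≤ c) (hgy : c ≤ g y) :
    ∃ z ∈ K, IsMaxOn F K z ∧ g z = c := by
  have hM : IsPreconnected {z ∈ K | F x ≤ F z} := (hF.convex_ge (F x)).isPreconnected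
  obtain ⟨z, ⟨hzK, hxz⟩, hgz⟩ :=
    hM.intermediate_value ⟨hx, le_rfl⟩ ⟨hy, hyF hx⟩ (hg.mono (sep_subset _ _))
      ⟨hgx, hgy⟩
  exact ⟨z, hzK, fun w hw => (hxF hw).trans hxz, hgz⟩

section Mixture

variable {E : Type*} {K : Set E} {u v : E → ℝ}

def mixture (u v : E → ℝ) (a : ℝ) (x : E) : ℝ := a * u x + (1 - a) * v x

@[simp] theorem mixture_zero : mixture u v 0 = v := by ext; simp [mixture]

@[simp] theorem mixture_one : mixture u v 1 = u := by ext; simp [mixture]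

variable [TopologicalSpace E]

theorem continuous_uncurry_mixture (hu : Continuous u) (hv : Continuous v) :
    Continuous (Function.uncurry (mixture u v)) := by
  unfold mixture Function.uncurry; fun_prop

theorem exists_mixture_isMaxOn_le_and_ge (hK : IsCompact K) (hu : Continuous u)
    (hv : Continuous v) (h₀ : ∃ x ∈ K, IsMaxOn v K x ∧ u x ≤ v x)
    (h₁ : ∃ x ∈ K, IsMaxOn u K x ∧ v x ≤ u x) :
    ∃ a ∈ Icc (0 : ℝ) 1, (∃ x ∈ K, IsMaxOn (mixture u v a) K x ∧ u x ≤ v x) ∧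
      ∃ y ∈ K, IsMaxOn (mixture u v a) K y ∧ v y ≤ u y := by
  have hmix := continuous_uncurry_mixture hu hv
  have hclosed (C : Set E) (hC : IsClosed C) :=
    isClosed_setOf_exists_isMaxOn_mem hmix (isCompact_Icc (a := (0 : ℝ)) (b := 1)) hK hC
  have hcover : Icc (0 : ℝ) 1 ⊆
      {a ∈ Icc 0 1 | ∃ x ∈ K, IsMaxOn (mixture u v a) K x ∧ x ∈ {x | u x ≤ v x}} ∪
      {a ∈ Icc 0 1 | ∃ x ∈ K, IsMaxOn (mixture u v a) K x ∧ x ∈ {x | v x ≤ u x}} := by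
    intro a ha
    obtain ⟨x, hxK, hx⟩ := hK.exists_isMaxOn (h₀.elim fun x hx => ⟨x, hx.1⟩)
      (hmix.comp (Continuous.prodMk_right a)).continuousOn
    rcases le_total (u x) (v x) with h | h
    exacts [Or.inl ⟨ha, x, hxK, hx, h⟩, Or.inr ⟨ha, x, hxK, hx, h⟩]
  have hzero : (0 : ℝ) ∈ Icc (0 : ℝ) 1 := left_mem_Icc.2 zero_le_one
  have hone : (1 : ℝ) ∈ Icc (0 : ℝ) 1 := right_mem_Icc.2 zero_le_one
  obtain ⟨x₀, hx₀K, hx₀, hx₀uv⟩ := h₀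
  obtain ⟨x₁, hx₁K, hx₁, hx₁uv⟩ := h₁
  obtain ⟨a, -, hlow, hhigh⟩ := isPreconnected_closed_iff.mp isPreconnected_Icc _ _
    (hclosed _ (isClosed_le hu hv)) (hclosed _ (isClosed_le hv hu)) hcover
    ⟨0, hzero, hzero, x₀, hx₀K, by simpa using hx₀, hx₀uv⟩
    ⟨1, hone, hone, x₁, hx₁K, by simpa using hx₁, hx₁uv⟩
  exact ⟨a, hlow.1, hlow.2, hhigh.2⟩

theorem exists_mixture_isMaxOn_eq [AddCommGroup E] [Module ℝ E] [ContinuousAdd E]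
    [ContinuousSMul ℝ E] (hK : IsCompact K) (hu : Continuous u) (hv : Continuous v)
    (hu' : ConcaveOn ℝ K u) (hv' : ConcaveOn ℝ K v)
    (h₀ : ∃ x ∈ K, IsMaxOn v K x ∧ u x ≤ v x)
    (h₁ : ∃ x ∈ K, IsMaxOn u K x ∧ v x ≤ u x) :
    ∃ a ∈ Icc (0 : ℝ) 1, ∃ x ∈ K, IsMaxOn (mixture u v a) K x ∧ u x = v x := by
  obtain ⟨a, ha, ⟨x, hxK, hx, hxuv⟩, ⟨y, hyK, hy, hyuv⟩⟩ :=
    exists_mixture_isMaxOn_le_and_ge hK hu hv h₀ h₁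
  have hconc : ConcaveOn ℝ K (mixture u v a) :=
    (hu'.smul ha.1).add (hv'.smul (sub_nonneg.2 ha.2))
  obtain ⟨z, hzK, hz, huvz⟩ := hconc.exists_isMaxOn_eq (hu.sub hv).continuousOn hxK hyK hx hy
    (sub_nonpos.2 hxuv) (sub_nonneg.2 hyuv)
  exact ⟨a, ha, z, hzK, hz, sub_eq_zero.1 huvz⟩

end Mixture

section Effects

open scoped MatrixOrder

variable {n : Type*} [Fintype n]

noncomputable def Matrix.reTraceMulLeft (ρ : Matrix n n ℂ) : Matrix n n ℂ →ₗ[ℝ] ℝ :=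
  Complex.reLm ∘ₗ traceLinearMap n ℝ ℂ ∘ₗ LinearMap.mulLeft ℝ ρ

variable [DecidableEq n]

theorem Matrix.PosSemidef.trace_mul_nonneg {A B : Matrix n n ℂ} (hA : A.PosSemidef)
    (hB : B.PosSemidef) : 0 ≤ (A * B).trace := by
  obtain ⟨C, rfl⟩ := CStarAlgebra.nonneg_iff_eq_star_mul_self.mp hB.nonneg
  rw [← Matrix.mul_assoc, Matrix.trace_mul_comm, ← Matrix.mul_assoc]
  exact (hA.mul_mul_conjTranspose_same C).trace_nonneg

theorem Matrix.PosSemidef.monotone_re_trace_mul {ρ : Matrix n n ℂ} (hρ : ρ.PosSemidef) :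
    Monotone fun P => (ρ * P).trace.re := by
  intro P Q hPQ
  have h := (Complex.nonneg_iff.1 (hρ.trace_mul_nonneg hPQ)).1
  rw [Matrix.mul_sub, Matrix.trace_sub, Complex.sub_re] at h
  exact sub_nonneg.1 h

theorem Matrix.isCompact_Icc_zero_one : IsCompact (Icc (0 : Matrix n n ℂ) 1) := by
  open scoped Matrix.Norms.L2Operator in
  refine Metric.isCompact_of_isClosed_isBounded isClosed_Icc
    ((Metric.isBounded_closedBall (x := 0) (r := ‖(1 : Matrix n n ℂ)‖)).subset fun P hP => ?_)
  rw [mem_closedBall_zero_iff]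
  exact CStarAlgebra.norm_le_norm_of_nonneg_of_le hP.1 hP.2

theorem Matrix.concaveOn_re_trace_mul_one_sub (ρ : Matrix n n ℂ) {s : Set (Matrix n n ℂ)}
    (hs : Convex ℝ s) : ConcaveOn ℝ s fun P => (ρ * (1 - P)).trace.re := by
  have h : (fun P => (ρ * (1 - P)).trace.re) =
      fun P => reTraceMulLeft ρ 1 - reTraceMulLeft ρ P := by
    ext P
    rw [← map_sub]
    rfl
  rw [h]
  exact (concaveOn_const _ hs).sub ((reTraceMulLeft ρ).convexOn hs)

theorem exists_mixture_isMaxOn_effect_eq {ρ₁ ρ₂ : Matrix n n ℂ} (hρ₁ : ρ₁.PosSemidef)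
    (hρ₂ : ρ₂.PosSemidef) :
    ∃ a ∈ Icc (0 : ℝ) 1, ∃ B ∈ Icc (0 : Matrix n n ℂ) 1,
      IsMaxOn (mixture (fun P => (ρ₁ * P).trace.re) (fun P => (ρ₂ * (1 - P)).trace.re) a)
        (Icc 0 1) B ∧ (ρ₁ * B).trace.re = (ρ₂ * (1 - B)).trace.re := by
  have hconv : Convex ℝ (Icc (0 : Matrix n n ℂ) 1) := convex_Icc 0 1
  refine exists_mixture_isMaxOn_eq isCompact_Icc_zero_one (by fun_prop) (by fun_prop)
    ((reTraceMulLeft ρ₁).concaveOn hconv) (concaveOn_re_trace_mul_one_sub ρ₂ hconv)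
    ⟨0, left_mem_Icc.2 zero_le_one, fun Q hQ => ?_, ?_⟩
    ⟨1, right_mem_Icc.2 zero_le_one, fun Q hQ => hρ₁.monotone_re_trace_mul hQ.2, ?_⟩
  · exact hρ₂.monotone_re_trace_mul (sub_le_sub_left hQ.1 1)
  · simpa using (Complex.nonneg_iff.1 hρ₂.trace_nonneg).1
  · simpa using (Complex.nonneg_iff.1 hρ₁.trace_nonneg).1

end Effects

open scoped MatrixOrder in
theorem isPOVM2_iff {d : ℕ} {P₁ P₂ : Matrix (Fin d) (Fin d) ℂ} :
    IsPOVM2 P₁ P₂ ↔ P₁ ∈ Icc 0 1 ∧ P₂ = 1 - P₁ := by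
  constructor
  · rintro ⟨hP₁, hP₂, hsum⟩
    refine ⟨⟨hP₁.nonneg, ?_⟩, eq_sub_of_add_eq' hsum⟩
    rwa [Matrix.le_iff, ← hsum, add_sub_cancel_left]
  · rintro ⟨⟨hP₁, hP₁'⟩, rfl⟩
    exact ⟨hP₁.posSemidef, hP₁', add_sub_cancel _ _⟩

/-- For any pair of quantum states there exist a prior `a₀ ∈ [0,1]` and a
Bayes-optimal POVM for that prior with equal probabilities of correct detection. -/
theorem exists_bayes_opt_with_equal_detection
    {d : ℕ} (ρ₁ ρ₂ : Matrix (Fin d) (Fin d) ℂ)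
    (hρ₁ : IsQState ρ₁) (hρ₂ : IsQState ρ₂) :
    ∃ a₀ ∈ Set.Icc (0 : ℝ) 1, ∃ B₁ B₂ : Matrix (Fin d) (Fin d) ℂ,
      IsBayesOpt ρ₁ ρ₂ a₀ B₁ B₂ ∧
      (ρ₁ * B₁).trace.re = (ρ₂ * B₂).trace.re := by
  obtain ⟨a, ha, B, hB, hBmax, hBeq⟩ := exists_mixture_isMaxOn_effect_eq hρ₁.1 hρ₂.1
  refine ⟨a, ha, B, 1 - B, ⟨isPOVM2_iff.2 ⟨hB, rfl⟩, fun P₁ P₂ hP => ?_⟩, hBeq⟩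
  obtain ⟨hP₁, rfl⟩ := isPOVM2_iff.1 hP
  exact hBmax hP₁
end

section
/- Let ρ₁, ρ₂ be quantum states on ℂ^d. Then the minimax optimum is attained by a Bayes-optimal measurement: there exist a₀ ∈ [0,1] and a two-outcome POVM (B₁, B₂) Bayes-optimal for the prior (a₀, 1−a₀) such that min(Tr[ρ₁B₁], Tr[ρ₂B₂]) equals the supremum, over all two-outcome POVMs (P₁, P₂), of min(Tr[ρ₁P₁], Tr[ρ₂P₂]). -/
open Matrix ComplexOrder

/-!
The POVMs form a compact convex set on which both success probabilities are real-linear, so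
`min(Tr[ρ₁P₁], Tr[ρ₂P₂])` attains its maximum at some POVM `B`. No POVM beats `B` in both
probabilities, so the set of pairs dominated by achievable pairs — a convex subset of `ℝ²` —
misses the open quadrant above the pair of `B`. A line separating the two has a normal with
nonnegative coordinates, which after normalisation is a prior `(a, 1 - a)`; `B` maximises the
corresponding Bayes payoff.
-/

open Set

theorem exists_weight_le_of_disjoint_Ioi_prod {S : Set (ℝ × ℝ)} (hS : Convex ℝ S) {z : ℝ × ℝ}
    (hz : z ∈ S) (hdisj : Disjoint (Ioi z.1 ×ˢ Ioi z.2) S) :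
    ∃ a ∈ Icc (0 : ℝ) 1, ∀ s ∈ S, a * s.1 + (1 - a) * s.2 ≤ a * z.1 + (1 - a) * z.2 := by
  obtain ⟨L, u, hLQ, hLS⟩ := geometric_hahn_banach_open ((convex_Ioi _).prod (convex_Ioi _))
    (isOpen_Ioi.prod isOpen_Ioi) hS hdisj
  set α := L (1, 0)
  set β := L (0, 1)
  have hL (p : ℝ × ℝ) : L p = p.1 * α + p.2 * β := by
    calc L p = L (p.1 • (1, 0) + p.2 • (0, 1)) := by simp
      _ = p.1 * α + p.2 * β := by rw [map_add, map_smul, map_smul, smul_eq_mul, smul_eq_mul]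
  have hle : ∀ x ≥ (0 : ℝ), ∀ y ≥ (0 : ℝ), L (z.1 + x, z.2 + y) ≤ u := by
    have : closure (Ioi z.1 ×ˢ Ioi z.2) ⊆ {q | L q ≤ u} :=
      closure_minimal (fun q hq => (hLQ q hq).le) (isClosed_le L.continuous continuous_const)
    rw [closure_prod_eq, closure_Ioi, closure_Ioi] at this
    exact fun x hx y hy => this ⟨by simpa using hx, by simpa using hy⟩
  -- `L < u` on the open quadrant gives `L ≤ u` at its corner `z ∈ S`, where also `u ≤ L`.
  have hLz : L z = u := le_antisymm (by simpa using hle 0 le_rfl 0 le_rfl) (hLS z hz)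
  have hα := hle 1 zero_le_one 0 le_rfl
  have hβ := hle 0 le_rfl 1 zero_le_one
  have hαβ := hLQ (z.1 + 1, z.2 + 1) ⟨by simp, by simp⟩
  simp only [hL] at hLz hα hβ hαβ
  replace hαβ : α + β < 0 := by linarith
  have hcomb (p : ℝ × ℝ) : α / (α + β) * p.1 + (1 - α / (α + β)) * p.2 = L p / (α + β) := by
    rw [hL]
    field_simp [hαβ.ne]
    ring
  refine ⟨α / (α + β), ⟨div_nonneg_of_nonpos (by linarith) hαβ.le,
    div_le_one_of_ge (by linarith) hαβ.le⟩, fun s hs => ?_⟩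
  rw [hcomb, hcomb, hL z, hLz]
  exact div_le_div_of_nonpos_of_le hαβ.le (hLS s hs)

theorem ConcaveOn.exists_weight_isMaxOn_of_isMaxOn_min {E : Type*} [AddCommGroup E]
    [Module ℝ E] {K : Set E} {f g : E → ℝ} (hf : ConcaveOn ℝ K f) (hg : ConcaveOn ℝ K g)
    {b : E} (hb : b ∈ K) (hmax : IsMaxOn (fun x => min (f x) (g x)) K b) :
    ∃ a ∈ Icc (0 : ℝ) 1, IsMaxOn (fun x => a * f x + (1 - a) * g x) K b := by
  set S : Set (ℝ × ℝ) := {p | ∃ x ∈ K, p.1 ≤ f x ∧ p.2 ≤ g x}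
  have hS : Convex ℝ S := by
    rintro p ⟨x, hx, hpx₁, hpx₂⟩ q ⟨y, hy, hqy₁, hqy₂⟩ s t hs ht hst
    refine ⟨s • x + t • y, hf.1 hx hy hs ht hst, ?_, ?_⟩
    · calc s * p.1 + t * q.1 ≤ s • f x + t • f y := by simp only [smul_eq_mul]; gcongr
        _ ≤ f (s • x + t • y) := hf.2 hx hy hs ht hst
    · calc s * p.2 + t * q.2 ≤ s • g x + t • g y := by simp only [smul_eq_mul]; gcongr
        _ ≤ g (s • x + t • y) := hg.2 hx hy hs ht hst
  have hdisj : Disjoint (Ioi (f b) ×ˢ Ioi (g b)) S := by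
    refine Set.disjoint_left.2 fun p ⟨hp₁, hp₂⟩ ⟨x, hx, hpx₁, hpx₂⟩ =>
      (isMaxOn_iff.1 hmax x hx).not_gt ?_
    exact lt_min ((min_le_left _ _).trans_lt (hp₁.trans_le hpx₁))
      ((min_le_right _ _).trans_lt (hp₂.trans_le hpx₂))
  obtain ⟨a, ha, h⟩ := exists_weight_le_of_disjoint_Ioi_prod hS (z := (f b, g b))
    ⟨b, hb, le_rfl, le_rfl⟩ hdisj
  exact ⟨a, ha, fun x hx => h (f x, g x) ⟨x, hx, le_rfl, le_rfl⟩⟩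

namespace Matrix

variable {n : Type*} [Fintype n] [DecidableEq n]

open scoped MatrixOrder Matrix.Norms.L2Operator in
theorem isCompact_Icc_complex (A B : Matrix n n ℂ) : IsCompact (Icc A B) := by
  refine Metric.isCompact_of_isClosed_isBounded isClosed_Icc ?_
  refine (Metric.isBounded_closedBall (x := A) (r := ‖B - A‖)).subset fun P hP => ?_
  rw [Metric.mem_closedBall, dist_eq_norm]
  exact CStarAlgebra.norm_le_norm_of_nonneg_of_le (sub_nonneg.2 hP.1) (sub_le_sub_right hP.2 A)

noncomputable def reTraceMul (ρ : Matrix n n ℂ) : Matrix n n ℂ →ₗ[ℝ] ℝ :=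
  Complex.reLm ∘ₗ (traceLinearMap n ℂ ℂ ∘ₗ LinearMap.mulLeft ℂ ρ).restrictScalars ℝ

end Matrix

open scoped MatrixOrder in
theorem isCompact_setOf_isPOVM2 {d : ℕ} :
    IsCompact {P : Matrix (Fin d) (Fin d) ℂ × Matrix (Fin d) (Fin d) ℂ | IsPOVM2 P.1 P.2} := by
  have : {P : Matrix (Fin d) (Fin d) ℂ × Matrix (Fin d) (Fin d) ℂ | IsPOVM2 P.1 P.2} =
      (fun P => (P, 1 - P)) '' Icc 0 1 := by
    ext ⟨P₁, P₂⟩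
    simp only [IsPOVM2, mem_ofPred_eq, mem_image, mem_Icc, Prod.mk.injEq, le_iff, sub_zero]
    constructor
    · rintro ⟨h₁, h₂, hsum⟩
      obtain rfl : P₂ = 1 - P₁ := eq_sub_of_add_eq' hsum
      exact ⟨P₁, ⟨h₁, h₂⟩, rfl, rfl⟩
    · rintro ⟨P, ⟨h₁, h₂⟩, rfl, rfl⟩
      exact ⟨h₁, h₂, add_sub_cancel P 1⟩
  rw [this]
  exact (isCompact_Icc_complex 0 1).image
    (continuous_id.prodMk (continuous_const.sub continuous_id))

theorem convex_setOf_isPOVM2 {d : ℕ} :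
    Convex ℝ {P : Matrix (Fin d) (Fin d) ℂ × Matrix (Fin d) (Fin d) ℂ | IsPOVM2 P.1 P.2} := by
  rintro ⟨P₁, P₂⟩ ⟨hP₁, hP₂, hP⟩ ⟨Q₁, Q₂⟩ ⟨hQ₁, hQ₂, hQ⟩ a b ha hb hab
  refine ⟨(hP₁.smul ha).add (hQ₁.smul hb), (hP₂.smul ha).add (hQ₂.smul hb), ?_⟩
  simp only [Prod.fst_add, Prod.snd_add, Prod.smul_fst, Prod.smul_snd]
  rw [add_add_add_comm, ← smul_add, ← smul_add, hP, hQ, ← add_smul, hab, one_smul]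

theorem minimax_attained_by_bayes_opt_general
    {d : ℕ} (ρ₁ ρ₂ : Matrix (Fin d) (Fin d) ℂ) :
    ∃ a₀ ∈ Set.Icc (0 : ℝ) 1, ∃ B₁ B₂ : Matrix (Fin d) (Fin d) ℂ,
      IsBayesOpt ρ₁ ρ₂ a₀ B₁ B₂ ∧
      min ((ρ₁ * B₁).trace.re) ((ρ₂ * B₂).trace.re) =
        sSup { x : ℝ | ∃ P₁ P₂ : Matrix (Fin d) (Fin d) ℂ, IsPOVM2 P₁ P₂ ∧
          x = min ((ρ₁ * P₁).trace.re) ((ρ₂ * P₂).trace.re) } := by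
  set K := {P : Matrix (Fin d) (Fin d) ℂ × Matrix (Fin d) (Fin d) ℂ | IsPOVM2 P.1 P.2}
  let f := ρ₁.reTraceMul ∘ₗ
    LinearMap.fst ℝ (Matrix (Fin d) (Fin d) ℂ) (Matrix (Fin d) (Fin d) ℂ)
  let g := ρ₂.reTraceMul ∘ₗ
    LinearMap.snd ℝ (Matrix (Fin d) (Fin d) ℂ) (Matrix (Fin d) (Fin d) ℂ)
  obtain ⟨B, hBK, hBmax⟩ := isCompact_setOf_isPOVM2.exists_isMaxOn
    ⟨(1, 0), PosSemidef.one, PosSemidef.zero, add_zero 1⟩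
    (f.continuous_of_finiteDimensional.min g.continuous_of_finiteDimensional).continuousOn
  obtain ⟨a, ha, hBayes⟩ :=
    (f.concaveOn convex_setOf_isPOVM2).exists_weight_isMaxOn_of_isMaxOn_min
      (g.concaveOn convex_setOf_isPOVM2) hBK hBmax
  have f_apply (P : Matrix (Fin d) (Fin d) ℂ × Matrix (Fin d) (Fin d) ℂ) :
      f P = (ρ₁ * P.1).trace.re := rfl
  have g_apply (P : Matrix (Fin d) (Fin d) ℂ × Matrix (Fin d) (Fin d) ℂ) :
      g P = (ρ₂ * P.2).trace.re := rfl
  simp only [isMaxOn_iff, f_apply, g_apply] at hBmax hBayes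
  have hminmax : IsGreatest {x : ℝ | ∃ P₁ P₂ : Matrix (Fin d) (Fin d) ℂ, IsPOVM2 P₁ P₂ ∧
      x = min ((ρ₁ * P₁).trace.re) ((ρ₂ * P₂).trace.re)}
      (min ((ρ₁ * B.1).trace.re) ((ρ₂ * B.2).trace.re)) :=
    ⟨⟨B.1, B.2, hBK, rfl⟩, by rintro _ ⟨P₁, P₂, hP, rfl⟩; exact hBmax (P₁, P₂) hP⟩
  exact ⟨a, ha, B.1, B.2, ⟨hBK, fun P₁ P₂ hP => hBayes (P₁, P₂) hP⟩, hminmax.csSup_eq.symm⟩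

/-- The minimax optimum is attained by a Bayes-optimal measurement: there are
a prior `a₀ ∈ [0,1]` and a POVM `(B₁,B₂)` Bayes-optimal for `(a₀, 1-a₀)` whose smallest
probability of correct detection equals the supremum over all POVMs of the smallest
probability of correct detection. -/
theorem minimax_attained_by_bayes_opt
    {d : ℕ} (ρ₁ ρ₂ : Matrix (Fin d) (Fin d) ℂ)
    (hρ₁ : IsQState ρ₁) (hρ₂ : IsQState ρ₂) :
    ∃ a₀ ∈ Set.Icc (0 : ℝ) 1, ∃ B₁ B₂ : Matrix (Fin d) (Fin d) ℂ,
      IsBayesOpt ρ₁ ρ₂ a₀ B₁ B₂ ∧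
      min ((ρ₁ * B₁).trace.re) ((ρ₂ * B₂).trace.re) =
        sSup { x : ℝ | ∃ P₁ P₂ : Matrix (Fin d) (Fin d) ℂ, IsPOVM2 P₁ P₂ ∧
          x = min ((ρ₁ * P₁).trace.re) ((ρ₂ * P₂).trace.re) } :=
  minimax_attained_by_bayes_opt_general ρ₁ ρ₂
end

section
/- Let ρ₁ = diag(1, 0) and ρ₂ = (1/2)·I be 2×2 quantum states. If a two-outcome POVM (Q₁, Q₂) on ℂ² satisfies min(Tr[ρ₁Q₁], Tr[ρ₂Q₂]) = 2/3 (the optimal minimax value), then Q₁ = diag(2/3, 0) and Q₂ = diag(1/3, 1). In particular, the unique optimal minimax POVM for this pair of states is not an orthogonal (projective) measurement, since Q₁ is not a projection. -/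
open Matrix ComplexOrder

/-!
Write `a, d ≥ 0` for the diagonal entries of `Q₁`. Then `Tr[ρ₁Q₁] = a` and
`Tr[ρ₂Q₂] = 1 - (a + d)/2`, so the minimum is at most `min(a, 1 - a/2) ≤ 2/3`, with equality
only for `a = 2/3` and `d = 0`. In a positive semidefinite matrix a vanishing diagonal entry forces
its whole row and column to vanish, hence `Q₁ = diag(2/3, 0)`, which is not idempotent.
-/

namespace Matrix.PosSemidef

variable {𝕜 n : Type*} [RCLike 𝕜] [Fintype n] {A : Matrix n n 𝕜}

theorem apply_eq_zero_of_apply_self_eq_zero (hA : A.PosSemidef) {j : n} (hj : A j j = 0)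
    (i : n) : A i j = 0 := by
  classical
  have hAj : A *ᵥ Pi.single j 1 = 0 := (hA.dotProduct_mulVec_zero_iff _).mp (by simp [hj])
  simpa using congrFun hAj i

theorem apply_eq_zero_of_apply_self_eq_zero' (hA : A.PosSemidef) {j : n} (hj : A j j = 0)
    (i : n) : A j i = 0 := by
  rw [← hA.isHermitian.apply, hA.apply_eq_zero_of_apply_self_eq_zero hj, star_zero]

theorem eq_of_re_apply_one_one_eq_zero {A : Matrix (Fin 2) (Fin 2) ℂ} (hA : A.PosSemidef)
    (h : (A 1 1).re = 0) : A = !![((A 0 0).re : ℂ), 0; 0, 0] := by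
  have hreal (i : Fin 2) : A i i = (A i i).re :=
    Complex.eq_re_of_ofReal_le (r := 0) (by rw [Complex.ofReal_zero]; exact hA.diag_nonneg)
  have h₁₁ : A 1 1 = 0 := by rw [hreal 1, h, Complex.ofReal_zero]
  ext i j
  fin_cases i <;> fin_cases j
  · exact hreal 0
  · exact hA.apply_eq_zero_of_apply_self_eq_zero h₁₁ 0
  · exact hA.apply_eq_zero_of_apply_self_eq_zero' h₁₁ 0
  · exact h₁₁

end Matrix.PosSemidef

theorem Matrix.trace_fin_two_diag_mul {R : Type*} [Semiring R] (x y : R)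
    (A : Matrix (Fin 2) (Fin 2) R) : (!![x, 0; 0, y] * A).trace = x * A 0 0 + y * A 1 1 := by
  simp [trace_fin_two, vecMul, dotProduct, Fin.sum_univ_two]

theorem eq_two_thirds_and_eq_zero_of_min_eq {a d : ℝ} (hd : 0 ≤ d)
    (h : min a (1 - (a + d) / 2) = 2 / 3) : a = 2 / 3 ∧ d = 0 := by
  have h₁ := h ▸ min_le_left a (1 - (a + d) / 2)
  have h₂ := h ▸ min_le_right a (1 - (a + d) / 2)
  constructor <;> linarith

/-- For `ρ₁ = diag(1,0)` and `ρ₂ = (1/2)·I`, any two-outcome POVM attaining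
the optimal minimax value `2/3` must equal `(diag(2/3,0), diag(1/3,1))`; in particular the
unique optimal minimax POVM is not a projective measurement, since its first element is not
a projection. -/
theorem minimax_optimal_povm_unique_and_nonorthogonal
    (ρ₁ ρ₂ : Matrix (Fin 2) (Fin 2) ℂ)
    (hρ₁ : ρ₁ = !![1, 0; 0, 0]) (hρ₂ : ρ₂ = !![1/2, 0; 0, 1/2])
    (Q₁ Q₂ : Matrix (Fin 2) (Fin 2) ℂ)
    (hQ : IsPOVM2 Q₁ Q₂)
    (hopt : min ((ρ₁ * Q₁).trace.re) ((ρ₂ * Q₂).trace.re) = 2 / 3) :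
    Q₁ = !![2/3, 0; 0, 0] ∧ Q₂ = !![1/3, 0; 0, 1] ∧ Q₁ * Q₁ ≠ Q₁ := by
  obtain ⟨hQ₁, -, hsum⟩ := hQ
  obtain rfl : Q₂ = 1 - Q₁ := eq_sub_of_add_eq' hsum
  subst hρ₁ hρ₂
  have hmin : min (Q₁ 0 0).re (1 - ((Q₁ 0 0).re + (Q₁ 1 1).re) / 2) = 2 / 3 := by
    rw [← hopt, mul_sub, mul_one, trace_sub, trace_fin_two_diag_mul, trace_fin_two_diag_mul,
      trace_fin_two]
    congr 1
    · simp
    · simp; ring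
  obtain ⟨ha, hd⟩ :=
    eq_two_thirds_and_eq_zero_of_min_eq (Complex.nonneg_iff.mp hQ₁.diag_nonneg).1 hmin
  have hQ₁_eq : Q₁ = !![2/3, 0; 0, 0] := by
    rw [hQ₁.eq_of_re_apply_one_one_eq_zero hd, ha]
    norm_num
  refine ⟨hQ₁_eq, ?_, fun h ↦ ?_⟩
  · rw [hQ₁_eq]
    ext i j
    fin_cases i <;> fin_cases j <;> norm_num
  · have h₀₀ := congrFun (congrFun h 0) 0
    rw [hQ₁_eq] at h₀₀
    norm_num at h₀₀
end

section
/- Let ρ₀ be a quantum state on ℂ^d, let U₁, …, U_N be unitary d×d matrices, and set ρᵢ = Uᵢρ₀Uᵢ† for i = 1, …, N (a covariant family of states). Let K be a positive semidefinite matrix such that Pᵢ = UᵢKUᵢ† defines an N-outcome POVM (∑ᵢ Pᵢ = I) that maximizes the average probability of correct detection ∑ᵢ Tr[ρᵢQᵢ] over all N-outcome POVMs (Q₁, …, Q_N). Then (P₁, …, P_N) also solves the minimax problem: for every N-outcome POVM (Q₁, …, Q_N), minᵢ Tr[ρᵢQᵢ] ≤ minᵢ Tr[ρᵢPᵢ].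 -/
open Matrix ComplexOrder

/-- An `N`-outcome POVM: a family of positive semidefinite matrices summing to the identity. -/
def IsPOVM {d N : ℕ} (P : Fin N → Matrix (Fin d) (Fin d) ℂ) : Prop :=
  (∀ i, (P i).PosSemidef) ∧ ∑ i, P i = 1

/-- For a covariant family of states `ρᵢ = UᵢρUᵢ†`, a covariant POVM
`Pᵢ = UᵢKUᵢ†` maximizing the average probability of correct detection also solves the
minimax problem. -/
theorem covariant_bayes_opt_is_minimax
    {d N : ℕ} (hN : 0 < N)
    (ρ₀ : Matrix (Fin d) (Fin d) ℂ) (hρ₀ : IsQState ρ₀)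
    (U : Fin N → Matrix (Fin d) (Fin d) ℂ) (hU : ∀ i, (U i)ᴴ * U i = 1)
    (ρ : Fin N → Matrix (Fin d) (Fin d) ℂ) (hρ : ∀ i, ρ i = U i * ρ₀ * (U i)ᴴ)
    (K : Matrix (Fin d) (Fin d) ℂ) (hK : K.PosSemidef)
    (P : Fin N → Matrix (Fin d) (Fin d) ℂ) (hP : ∀ i, P i = U i * K * (U i)ᴴ)
    (hPovm : IsPOVM P)
    (hmax : ∀ Q : Fin N → Matrix (Fin d) (Fin d) ℂ, IsPOVM Q →
      ∑ i, ((ρ i * Q i).trace.re) ≤ ∑ i, ((ρ i * P i).trace.re)) :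
    ∀ Q : Fin N → Matrix (Fin d) (Fin d) ℂ, IsPOVM Q →
      (⨅ i, (ρ i * Q i).trace.re) ≤ ⨅ i, (ρ i * P i).trace.re := by
  intro Q hQ
  haveI : Nonempty (Fin N) := ⟨⟨0, hN⟩⟩
  set c : ℝ := (ρ₀ * K).trace.re with hc
  have key : ∀ i, (ρ i * P i).trace.re = c := by
    intro i
    rw [hρ i, hP i]
    have h1 : U i * ρ₀ * (U i)ᴴ * (U i * K * (U i)ᴴ) = U i * (ρ₀ * K) * (U i)ᴴ := by
      have : (U i)ᴴ * (U i * (K * (U i)ᴴ)) = K * (U i)ᴴ := by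
        rw [← Matrix.mul_assoc, hU i, one_mul]
      simp only [Matrix.mul_assoc, this]
    rw [h1, Matrix.trace_mul_cycle, ← Matrix.mul_assoc, hU i, one_mul]
  have hinfP : (⨅ i, (ρ i * P i).trace.re) = c := by
    simp only [key]
    exact ciInf_const
  rw [hinfP]
  have hbdd : BddBelow (Set.range fun i => (ρ i * Q i).trace.re) :=
    (Set.finite_range _).bddBelow
  have hle : ∀ i, (⨅ j, (ρ j * Q j).trace.re) ≤ (ρ i * Q i).trace.re :=
    fun i => ciInf_le hbdd i
  have hsum := hmax Q hQ
  have hsumP : ∑ i, (ρ i * P i).trace.re = (N : ℝ) * c := by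
    simp [key, Finset.sum_const, mul_comm]
  have hNinf : (N : ℝ) * (⨅ j, (ρ j * Q j).trace.re) ≤ (N : ℝ) * c := by
    calc (N : ℝ) * (⨅ j, (ρ j * Q j).trace.re)
        = ∑ _i : Fin N, (⨅ j, (ρ j * Q j).trace.re) := by
          simp [Finset.sum_const, mul_comm]
      _ ≤ ∑ i, (ρ i * Q i).trace.re := Finset.sum_le_sum fun i _ => hle i
      _ ≤ ∑ i, (ρ i * P i).trace.re := hsum
      _ = (N : ℝ) * c := hsumP
  have hNpos : (0 : ℝ) < N := by exact_mod_cast hN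
  exact le_of_mul_le_mul_left hNinf hNpos
end

section
/- Let ρ₀ be a quantum state on ℂ^d, let U₁, …, U_N be unitary d×d matrices, set ρᵢ = Uᵢρ₀Uᵢ†, and suppose there exists a positive semidefinite K such that Pᵢ = UᵢKUᵢ† is an N-outcome POVM maximizing ∑ᵢ Tr[ρᵢQᵢ] over all N-outcome POVMs. Then every N-outcome POVM (Q₁, …, Q_N) that maximizes minᵢ Tr[ρᵢQᵢ] over all N-outcome POVMs satisfies Tr[ρᵢQᵢ] = Tr[ρ₀K] for every i; in particular Tr[ρᵢQᵢ] is independent of i. -/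
open Matrix ComplexOrder

/-- In the covariant case, every POVM that is optimal for the minimax problem
has probability of correct detection `Tr[ρᵢQᵢ] = Tr[ρ₀K]` independent of `i`. -/
theorem covariant_minimax_opt_detection_constant
    {d N : ℕ} (hN : 0 < N)
    (ρ₀ : Matrix (Fin d) (Fin d) ℂ) (hρ₀ : IsQState ρ₀)
    (U : Fin N → Matrix (Fin d) (Fin d) ℂ) (hU : ∀ i, (U i)ᴴ * U i = 1)
    (ρ : Fin N → Matrix (Fin d) (Fin d) ℂ) (hρ : ∀ i, ρ i = U i * ρ₀ * (U i)ᴴ)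
    (K : Matrix (Fin d) (Fin d) ℂ) (hK : K.PosSemidef)
    (P : Fin N → Matrix (Fin d) (Fin d) ℂ) (hP : ∀ i, P i = U i * K * (U i)ᴴ)
    (hPovm : IsPOVM P)
    (hmax : ∀ Q : Fin N → Matrix (Fin d) (Fin d) ℂ, IsPOVM Q →
      ∑ i, ((ρ i * Q i).trace.re) ≤ ∑ i, ((ρ i * P i).trace.re))
    (Q : Fin N → Matrix (Fin d) (Fin d) ℂ) (hQ : IsPOVM Q)
    (hQopt : ∀ R : Fin N → Matrix (Fin d) (Fin d) ℂ, IsPOVM R →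
      (⨅ i, (ρ i * R i).trace.re) ≤ ⨅ i, (ρ i * Q i).trace.re) :
    ∀ i, (ρ i * Q i).trace.re = (ρ₀ * K).trace.re := by
  haveI : Nonempty (Fin N) := ⟨⟨0, hN⟩⟩
  -- Tr[ρᵢ Pᵢ] = Tr[ρ₀ K]
  have h1 : ∀ i, (ρ i * P i).trace = (ρ₀ * K).trace := by
    intro i
    rw [hρ i, hP i]
    have : U i * ρ₀ * (U i)ᴴ * (U i * K * (U i)ᴴ) = U i * (ρ₀ * K) * (U i)ᴴ := by
      have h := hU i
      calc U i * ρ₀ * (U i)ᴴ * (U i * K * (U i)ᴴ)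
          = U i * ρ₀ * ((U i)ᴴ * U i) * K * (U i)ᴴ := by noncomm_ring
        _ = U i * (ρ₀ * K) * (U i)ᴴ := by rw [h]; noncomm_ring
    rw [this, Matrix.trace_mul_cycle, ← Matrix.mul_assoc, hU i, Matrix.one_mul]
  -- each Tr[ρᵢ Qᵢ].re ≥ Tr[ρ₀K].re
  have hge : ∀ i, (ρ₀ * K).trace.re ≤ (ρ i * Q i).trace.re := by
    intro i
    have hinf := hQopt P hPovm
    have hconst : (⨅ j, (ρ j * P j).trace.re) = (ρ₀ * K).trace.re := by
      simp only [h1]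
      exact ciInf_const
    have hle : (⨅ j, (ρ j * Q j).trace.re) ≤ (ρ i * Q i).trace.re :=
      ciInf_le (Set.Finite.bddBelow (Set.finite_range _)) i
    linarith [hinf, hconst ▸ hinf]
  -- sum bound
  have hsum : ∑ i, (ρ i * Q i).trace.re ≤ ∑ _i : Fin N, (ρ₀ * K).trace.re := by
    have := hmax Q hQ
    calc ∑ i, (ρ i * Q i).trace.re ≤ ∑ i, (ρ i * P i).trace.re := this
      _ = ∑ i, (ρ₀ * K).trace.re := by simp [h1]
  -- conclude equality
  intro i
  by_contra hne
  have hlt : (ρ₀ * K).trace.re < (ρ i * Q i).trace.re := lt_of_le_of_ne (hge i) (Ne.symm hne)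
  have : ∑ _j : Fin N, (ρ₀ * K).trace.re < ∑ j, (ρ j * Q j).trace.re :=
    Finset.sum_lt_sum (fun j _ => hge j) ⟨i, Finset.mem_univ i, hlt⟩
  linarith
end

section
/- Let ψ₁, …, ψ_N be a linearly independent family of unit vectors spanning ℂ^N, and let ω₁, …, ω_N be the biorthogonal family, i.e. ⟨ωᵢ, ψ_j⟩ = δ_ij for all i, j. Fix j ∈ {1,…,N}. If P is a positive semidefinite N×N complex matrix with ⟨ψᵢ, P ψᵢ⟩ = 0 for all i ≠ j, then there exists c ≥ 0 such that P = c · |ω_j⟩⟨ω_j|. -/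
/-!
A positive semidefinite `P` with `⟨ψᵢ, Pψᵢ⟩ = 0` kills `ψᵢ`, so `P` kills every `ψᵢ` with `i ≠ j`;
being Hermitian, `P` then maps `ψ_j` to a vector orthogonal to those `ψᵢ`, which by
biorthogonality is `c • ω_j` with `c = ⟨ψ_j, Pψ_j⟩ ≥ 0`. The matrices `P` and `c |ω_j⟩⟨ω_j|`
therefore agree on the spanning family `ψ`.
-/

open Matrix ComplexOrder

section
variable {ι m n 𝕜 : Type*} [Fintype n]

theorem Matrix.ext_of_mulVec_of_span_eq_top [CommSemiring 𝕜] {v : ι → n → 𝕜}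
    (hspan : Submodule.span 𝕜 (Set.range v) = ⊤) {A B : Matrix m n 𝕜}
    (h : ∀ i, A *ᵥ v i = B *ᵥ v i) : A = B := by
  classical
  exact Matrix.toLin'.injective (LinearMap.ext_on_range hspan h)

variable [Field 𝕜] [PartialOrder 𝕜] [StarRing 𝕜] [StarOrderedRing 𝕜]

theorem eq_zero_of_forall_star_dotProduct_eq_zero {v : ι → n → 𝕜}
    (hspan : Submodule.span 𝕜 (Set.range v) = ⊤) {w : n → 𝕜}
    (hw : ∀ i, star (v i) ⬝ᵥ w = 0) : w = 0 := by
  have hperp : ∀ x ∈ Submodule.span 𝕜 (Set.range v), star x ⬝ᵥ w = 0 := fun x hx ↦ by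
    induction hx using Submodule.span_induction with
    | mem _ hx => obtain ⟨i, rfl⟩ := hx; exact hw i
    | zero => simp
    | add x y _ _ hx hy => simp [add_dotProduct, hx, hy]
    | smul a x _ hx => simp [smul_dotProduct, hx]
  exact dotProduct_star_self_eq_zero.mp (hperp w (hspan ▸ Submodule.mem_top))

theorem eq_smul_of_star_dotProduct_eq_ite [DecidableEq ι] {ψ ω : ι → n → 𝕜}
    (hspan : Submodule.span 𝕜 (Set.range ψ) = ⊤)
    (hbi : ∀ i j, star (ω i) ⬝ᵥ ψ j = if i = j then 1 else 0) {j : ι} {c : 𝕜} {w : n → 𝕜}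
    (hw : ∀ i, star (ψ i) ⬝ᵥ w = if i = j then c else 0) : w = c • ω j := by
  refine sub_eq_zero.mp (eq_zero_of_forall_star_dotProduct_eq_zero hspan fun i ↦ ?_)
  rw [dotProduct_sub, dotProduct_smul, hw, star_dotProduct, hbi]
  by_cases hij : i = j
  · simp [hij]
  · simp [hij, Ne.symm hij]

end

theorem Matrix.IsHermitian.star_dotProduct_mulVec_eq_zero {n 𝕜 : Type*} [Fintype n]
    [CommSemiring 𝕜] [StarRing 𝕜] {A : Matrix n n 𝕜} (hA : A.IsHermitian) {x : n → 𝕜}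
    (hx : A *ᵥ x = 0) (y : n → 𝕜) : star x ⬝ᵥ A *ᵥ y = 0 := by
  rw [dotProduct_mulVec, ← hA.eq, ← star_mulVec, hx, star_zero, zero_dotProduct]

theorem unambiguous_povm_element_is_multiple_of_biorthogonal_general
    {N : ℕ} (ψ ω : Fin N → (Fin N → ℂ))
    (hspan : Submodule.span ℂ (Set.range ψ) = ⊤)
    (hbi : ∀ i j, star (ω i) ⬝ᵥ ψ j = if i = j then 1 else 0)
    (j : Fin N)
    (P : Matrix (Fin N) (Fin N) ℂ) (hP : P.PosSemidef)
    (hzero : ∀ i, i ≠ j → star (ψ i) ⬝ᵥ (P *ᵥ ψ i) = 0) :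
    ∃ c : ℝ, 0 ≤ c ∧ P = (c : ℂ) • vecMulVec (ω j) (star (ω j)) := by
  have hker : ∀ i, i ≠ j → P *ᵥ ψ i = 0 := fun i hi ↦
    (hP.dotProduct_mulVec_zero_iff (ψ i)).mp (hzero i hi)
  obtain ⟨c, hc, hcψ⟩ := RCLike.nonneg_iff_exists_ofReal.mp (hP.dotProduct_mulVec_nonneg (ψ j))
  have hPj : P *ᵥ ψ j = (c : ℂ) • ω j := by
    refine eq_smul_of_star_dotProduct_eq_ite hspan hbi fun i ↦ ?_
    by_cases hij : i = j
    · simp [hij, ← hcψ]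
    · simp [hij, hP.isHermitian.star_dotProduct_mulVec_eq_zero (hker i hij)]
  refine ⟨c, hc, Matrix.ext_of_mulVec_of_span_eq_top hspan fun i ↦ ?_⟩
  rw [smul_mulVec, vecMulVec_mulVec, hbi]
  by_cases hij : i = j
  · simp [hij, hPj]
  · simp [hker i hij, Ne.symm hij]

/-- If `ψ₁, …, ψ_N` is a linearly independent spanning family of unit vectors
of `ℂ^N` with biorthogonal family `ω₁, …, ω_N`, and `P ≥ 0` satisfies `⟨ψᵢ, Pψᵢ⟩ = 0` for all
`i ≠ j`, then `P` is a nonnegative multiple of `|ω_j⟩⟨ω_j|`. -/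
theorem unambiguous_povm_element_is_multiple_of_biorthogonal
    {N : ℕ} (ψ ω : Fin N → (Fin N → ℂ))
    (hli : LinearIndependent ℂ ψ)
    (hspan : Submodule.span ℂ (Set.range ψ) = ⊤)
    (hunit : ∀ i, star (ψ i) ⬝ᵥ ψ i = 1)
    (hbi : ∀ i j, star (ω i) ⬝ᵥ ψ j = if i = j then 1 else 0)
    (j : Fin N)
    (P : Matrix (Fin N) (Fin N) ℂ) (hP : P.PosSemidef)
    (hzero : ∀ i, i ≠ j → star (ψ i) ⬝ᵥ (P *ᵥ ψ i) = 0) :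
    ∃ c : ℝ, 0 ≤ c ∧ P = (c : ℂ) • vecMulVec (ω j) (star (ω j)) :=
  unambiguous_povm_element_is_multiple_of_biorthogonal_general ψ ω hspan hbi j P hP hzero
end

section
/- Let ψ₁, …, ψ_N be a linearly independent family of unit vectors spanning ℂ^N, let ω₁, …, ω_N be the biorthogonal family (⟨ωᵢ, ψ_j⟩ = δ_ij), and let κ = 1 / λ_max, where λ_max is the largest eigenvalue of the positive definite matrix G = ∑ᵢ |ωᵢ⟩⟨ωᵢ|. Call a family (P₁, …, P_N, P_{N+1}) of positive semidefinite N×N matrices with ∑_{k=1}^{N+1} P_k = I an unambiguous POVM if ⟨ψᵢ, P_j ψᵢ⟩ = 0 for all i ≠ j with i, j ∈ {1,…,N}. Then: (1) setting Pᵢ = κ·|ωᵢ⟩⟨ωᵢ| for i ≤ N and P_{N+1} = I − κ·G defines an unambiguous POVM with min_{i≤N} ⟨ψᵢ, Pᵢ ψᵢ⟩ = κ; and (2) every unambiguous POVM (Q₁,…,Q_{N+1}) satisfies min_{i≤N} ⟨ψᵢ, Qᵢ ψᵢ⟩ ≤ κ. -/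
/-!
Biorthogonality of `ω` and `ψ` means `∑ᵢ |ψᵢ⟩⟨ωᵢ| = I`. A positive semidefinite `Q` with
`⟨ψᵢ, Q ψᵢ⟩ = 0`, hence `Q ψᵢ = 0`, for all `i ≠ j` is therefore `Q = qⱼ |ωⱼ⟩⟨ωⱼ|` with
`qⱼ = ⟨ψⱼ, Q ψⱼ⟩`. For an unambiguous POVM with worst-case success `m = minⱼ qⱼ` this gives
`m G ≤ ∑ⱼ Qⱼ ≤ I` in the Loewner order, and testing on a top eigenvector of `G` yields
`m λ_max ≤ 1`. Conversely `κ G ≤ I` exactly when `κ λ_max ≤ 1`, which makes the proposed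
family a POVM; its success probabilities all equal `κ`.
-/

open Matrix ComplexOrder

/-- An unambiguous POVM for the pure states `ψ₁, …, ψ_N`: the `N` conclusive elements
`Q₁, …, Q_N` together with the inconclusive element `Qinc` are positive semidefinite, sum to
the identity, and never produce a wrong conclusive answer: `⟨ψᵢ, Q_j ψᵢ⟩ = 0` for `i ≠ j`. -/
def IsUnambPOVM {N : ℕ} (ψ : Fin N → (Fin N → ℂ))
    (Q : Fin N → Matrix (Fin N) (Fin N) ℂ) (Qinc : Matrix (Fin N) (Fin N) ℂ) : Prop :=
  (∀ i, (Q i).PosSemidef) ∧ Qinc.PosSemidef ∧ (∑ i, Q i) + Qinc = 1 ∧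
    ∀ i j, i ≠ j → star (ψ i) ⬝ᵥ (Q j *ᵥ ψ i) = 0

open scoped MatrixOrder

namespace Matrix

variable {n 𝕜 : Type*} [Fintype n] [RCLike 𝕜]

theorem PosSemidef.nonneg_of_mulVec_eq_smul {A : Matrix n n 𝕜} (hA : A.PosSemidef)
    {v : n → 𝕜} (hv : v ≠ 0) {μ : ℝ} (hAv : A *ᵥ v = (μ : 𝕜) • v) : 0 ≤ μ := by
  have h := hA.dotProduct_mulVec_nonneg v
  rw [hAv, dotProduct_smul, smul_eq_mul] at h
  by_contra! hμ
  exact h.not_gt <|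
    mul_neg_of_neg_of_pos (by exact_mod_cast hμ) (dotProduct_star_self_pos_iff.2 hv)

theorem mul_le_one_of_smul_le_one [DecidableEq n] {A : Matrix n n 𝕜} {t μ : ℝ}
    (hA : (t : 𝕜) • A ≤ 1) {v : n → 𝕜} (hv : v ≠ 0) (hAv : A *ᵥ v = (μ : 𝕜) • v) :
    t * μ ≤ 1 := by
  have hv' : (1 - (t : 𝕜) • A) *ᵥ v = ((1 - t * μ : ℝ) : 𝕜) • v := by
    rw [sub_mulVec, one_mulVec, smul_mulVec, hAv, smul_smul]
    push_cast
    rw [sub_smul, one_smul]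
  exact sub_nonneg.1 (PosSemidef.nonneg_of_mulVec_eq_smul hA hv hv')

theorem IsHermitian.le_smul_one [DecidableEq n] {A : Matrix n n 𝕜} (hA : A.IsHermitian) {c : ℝ}
    (hc : c ∈ upperBounds {μ : ℝ | ∃ v : n → 𝕜, v ≠ 0 ∧ A *ᵥ v = (μ : 𝕜) • v}) :
    A ≤ (c : 𝕜) • 1 := by
  have hB : ((c : 𝕜) • 1 - A).IsHermitian := by
    refine IsHermitian.sub ?_ hA
    simp [IsHermitian, conjTranspose_smul]
  refine hB.posSemidef_iff_eigenvalues_nonneg.2 fun i => ?_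
  set w := ⇑(hB.eigenvectorBasis i)
  have hw0 : w ≠ 0 := by simpa [w] using hB.eigenvectorBasis.orthonormal.ne_zero i
  have hAw : A *ᵥ w = ((c - hB.eigenvalues i : ℝ) : 𝕜) • w := by
    have hw := hB.mulVec_eigenvectorBasis i
    rw [RCLike.real_smul_eq_coe_smul (K := 𝕜), sub_mulVec, smul_mulVec, one_mulVec] at hw
    rw [RCLike.ofReal_sub, sub_smul, ← hw, sub_sub_cancel]
  simpa using hc ⟨w, hw0, hAw⟩

theorem IsHermitian.smul_le_one [DecidableEq n] {A : Matrix n n 𝕜} (hA : A.IsHermitian) {c t : ℝ}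
    (hc : c ∈ upperBounds {μ : ℝ | ∃ v : n → 𝕜, v ≠ 0 ∧ A *ᵥ v = (μ : 𝕜) • v})
    (ht : 0 ≤ t) (htc : t * c ≤ 1) : (t : 𝕜) • A ≤ 1 := by
  have hdecomp : 1 - (t : 𝕜) • A = ((1 - t * c : ℝ) : 𝕜) • 1 + (t : 𝕜) • ((c : 𝕜) • 1 - A) := by
    push_cast
    rw [smul_sub, smul_smul, sub_smul, one_smul]
    abel
  rw [le_iff, hdecomp]
  exact (PosSemidef.one.smul (by exact_mod_cast sub_nonneg.2 htc)).add
    ((le_iff.1 (hA.le_smul_one hc)).smul (by exact_mod_cast ht))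

theorem sum_vecMulVec_eq_one_of_biorthogonal {R : Type*} [CommRing R] [DecidableEq n]
    {a b : n → n → R} (h : ∀ i j, a i ⬝ᵥ b j = if i = j then 1 else 0) :
    ∑ i, vecMulVec (b i) (a i) = 1 := by
  have hab : of a * (of b)ᵀ = 1 := by
    ext i j
    rw [mul_apply, one_apply, ← h i j]
    rfl
  rw [← mul_eq_one_comm.1 hab]
  ext k l
  simp [mul_apply, vecMulVec_apply, Matrix.sum_apply]

section Biorthogonal

variable [DecidableEq n] {ψ ω : n → n → 𝕜}
  (hbi : ∀ i j, star (ω i) ⬝ᵥ ψ j = if i = j then 1 else 0)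
include hbi

theorem star_dotProduct_eq_ite_of_biorthogonal (i j : n) :
    star (ψ i) ⬝ᵥ ω j = if i = j then 1 else 0 := by
  rw [star_dotProduct, hbi]
  rcases eq_or_ne i j with rfl | h <;> simp [*, Ne.symm]

theorem star_dotProduct_vecMulVec_mulVec_of_biorthogonal (i j : n) :
    star (ψ i) ⬝ᵥ (vecMulVec (ω j) (star (ω j)) *ᵥ ψ i) = if i = j then 1 else 0 := by
  rw [vecMulVec_mulVec, op_smul_eq_smul, dotProduct_smul, hbi j i,
    star_dotProduct_eq_ite_of_biorthogonal hbi i j]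
  rcases eq_or_ne i j with rfl | h <;> simp [*, Ne.symm]

theorem sum_vecMulVec_mulVec_of_biorthogonal (j : n) :
    (∑ i, vecMulVec (ω i) (star (ω i))) *ᵥ ψ j = ω j := by
  simp only [sum_mulVec, vecMulVec_mulVec, op_smul_eq_smul, hbi, ite_smul, one_smul, zero_smul,
    Finset.sum_ite_eq', Finset.mem_univ, if_true]

theorem isUnit_sum_vecMulVec_of_biorthogonal : IsUnit (∑ i, vecMulVec (ω i) (star (ω i))) := by
  refine IsUnit.of_mul_eq_one (∑ i, vecMulVec (ψ i) (star (ψ i))) ?_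
  simp only [Finset.mul_sum, mul_vecMulVec, sum_vecMulVec_mulVec_of_biorthogonal hbi]
  exact sum_vecMulVec_eq_one_of_biorthogonal (star_dotProduct_eq_ite_of_biorthogonal hbi)

theorem eq_smul_vecMulVec_of_biorthogonal {Q : Matrix n n 𝕜} (hQ : Q.IsHermitian) {j : n}
    (hzero : ∀ i, i ≠ j → Q *ᵥ ψ i = 0) :
    Q = (star (ψ j) ⬝ᵥ (Q *ᵥ ψ j)) • vecMulVec (ω j) (star (ω j)) := by
  have hQψ : Q *ᵥ ψ j = (star (ψ j) ⬝ᵥ (Q *ᵥ ψ j)) • ω j := by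
    conv_lhs => rw [← one_mulVec (Q *ᵥ ψ j), ← sum_vecMulVec_eq_one_of_biorthogonal
      (star_dotProduct_eq_ite_of_biorthogonal hbi)]
    rw [sum_mulVec, Finset.sum_eq_single j]
    · rw [vecMulVec_mulVec, op_smul_eq_smul]
    · intro i _ hij
      rw [vecMulVec_mulVec, op_smul_eq_smul, ← hQ.eq, dotProduct_mulVec, ← star_mulVec,
        hzero i hij, star_zero, zero_dotProduct, zero_smul]
    · simp
  calc Q = Q * ∑ i, vecMulVec (ψ i) (star (ω i)) := by
        rw [sum_vecMulVec_eq_one_of_biorthogonal hbi, mul_one]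
    _ = vecMulVec (Q *ᵥ ψ j) (star (ω j)) := by
        rw [Finset.mul_sum, Finset.sum_eq_single j]
        · rw [mul_vecMulVec]
        · intro i _ hij
          rw [mul_vecMulVec, hzero i hij, zero_vecMulVec]
        · simp
    _ = _ := by rw [← smul_vecMulVec, ← hQψ]

end Biorthogonal

end Matrix

section UnambiguousDiscrimination

variable {N : ℕ} {ψ ω : Fin N → Fin N → ℂ}
  (hbi : ∀ i j, star (ω i) ⬝ᵥ ψ j = if i = j then 1 else 0)
include hbi

theorem isUnambPOVM_smul_vecMulVec {κ : ℝ} (hκ : 0 ≤ κ)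
    (hκG : (κ : ℂ) • ∑ i, vecMulVec (ω i) (star (ω i)) ≤ 1) :
    IsUnambPOVM ψ (fun i => (κ : ℂ) • vecMulVec (ω i) (star (ω i)))
      (1 - (κ : ℂ) • ∑ i, vecMulVec (ω i) (star (ω i))) := by
  refine ⟨fun i => (posSemidef_vecMulVec_self_star _).smul (by exact_mod_cast hκ), hκG, ?_,
    fun i j hij => ?_⟩
  · rw [← Finset.smul_sum, add_sub_cancel]
  · rw [smul_mulVec, dotProduct_smul, star_dotProduct_vecMulVec_mulVec_of_biorthogonal hbi,
      if_neg hij, smul_zero]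

theorem IsUnambPOVM.smul_sum_vecMulVec_le_one {Q : Fin N → Matrix (Fin N) (Fin N) ℂ}
    {Qinc : Matrix (Fin N) (Fin N) ℂ} (hQ : IsUnambPOVM ψ Q Qinc) :
    ((⨅ i, (star (ψ i) ⬝ᵥ (Q i *ᵥ ψ i)).re : ℝ) : ℂ) • ∑ i, vecMulVec (ω i) (star (ω i)) ≤ 1 := by
  obtain ⟨hQpsd, hQinc, hsum, hunamb⟩ := hQ
  set m := ⨅ i, (star (ψ i) ⬝ᵥ (Q i *ᵥ ψ i)).re
  have hQ_eq (j : Fin N) :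
      Q j = (star (ψ j) ⬝ᵥ (Q j *ᵥ ψ j)) • vecMulVec (ω j) (star (ω j)) :=
    eq_smul_vecMulVec_of_biorthogonal hbi (hQpsd j).1 fun i hij =>
      ((hQpsd j).dotProduct_mulVec_zero_iff _).1 (hunamb i j hij)
  have hm (j : Fin N) : (m : ℂ) ≤ star (ψ j) ⬝ᵥ (Q j *ᵥ ψ j) := by
    have hq := Complex.le_def.1 ((hQpsd j).dotProduct_mulVec_nonneg (ψ j))
    exact Complex.le_def.2
      ⟨by simpa using ciInf_le (Set.finite_range _).bddBelow j, by simpa using hq.2⟩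
  calc (m : ℂ) • ∑ i, vecMulVec (ω i) (star (ω i))
      = ∑ j, (m : ℂ) • vecMulVec (ω j) (star (ω j)) := Finset.smul_sum ..
    _ ≤ ∑ j, Q j := Finset.sum_le_sum fun j _ => by
        rw [le_iff]
        nth_rewrite 1 [hQ_eq j]
        rw [← sub_smul]
        exact (posSemidef_vecMulVec_self_star _).smul (sub_nonneg.2 (hm j))
    _ ≤ ∑ j, Q j + Qinc := le_add_of_nonneg_right hQinc.nonneg
    _ = 1 := hsum

end UnambiguousDiscrimination

theorem optimal_minimax_unambiguous_discrimination_general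
    {N : ℕ} (ψ ω : Fin N → (Fin N → ℂ))
    (hbi : ∀ i j, star (ω i) ⬝ᵥ ψ j = if i = j then 1 else 0)
    (G : Matrix (Fin N) (Fin N) ℂ)
    (hG : G = ∑ i, vecMulVec (ω i) (star (ω i)))
    (lmax : ℝ)
    (hlmax : IsGreatest { x : ℝ | ∃ v : Fin N → ℂ, v ≠ 0 ∧ G *ᵥ v = (x : ℂ) • v } lmax)
    (κ : ℝ) (hκ : κ = 1 / lmax) :
    (IsUnambPOVM ψ (fun i => (κ : ℂ) • vecMulVec (ω i) (star (ω i))) (1 - (κ : ℂ) • G) ∧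
      (⨅ i, (star (ψ i) ⬝ᵥ (((κ : ℂ) • vecMulVec (ω i) (star (ω i))) *ᵥ ψ i)).re) = κ) ∧
    ∀ (Q : Fin N → Matrix (Fin N) (Fin N) ℂ) (Qinc : Matrix (Fin N) (Fin N) ℂ),
      IsUnambPOVM ψ Q Qinc →
        (⨅ i, (star (ψ i) ⬝ᵥ (Q i *ᵥ ψ i)).re) ≤ κ := by
  subst hG
  obtain ⟨v, hv0, hGv⟩ := hlmax.1
  -- `⨅` over an empty index type is `0`; the eigenvector `v ≠ 0` rules out `N = 0`.
  obtain ⟨k, -⟩ := Function.ne_iff.1 hv0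
  have : Nonempty (Fin N) := ⟨k⟩
  have hGpsd := posSemidef_sum Finset.univ fun i _ => posSemidef_vecMulVec_self_star (ω i)
  have hlmax_pos : 0 < lmax := by
    refine (hGpsd.nonneg_of_mulVec_eq_smul hv0 hGv).lt_of_ne fun h => hv0 ?_
    refine mulVec_injective_iff_isUnit.2 (isUnit_sum_vecMulVec_of_biorthogonal hbi) ?_
    rw [hGv, ← h]
    simp
  have hκ0 : 0 ≤ κ := by rw [hκ]; positivity
  have hκG := hGpsd.isHermitian.smul_le_one hlmax.2 hκ0
    (by rw [hκ, one_div_mul_cancel hlmax_pos.ne'])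
  refine ⟨⟨isUnambPOVM_smul_vecMulVec hbi hκ0 hκG, ?_⟩, fun Q Qinc hQ => ?_⟩
  · simp only [smul_mulVec, dotProduct_smul, star_dotProduct_vecMulVec_mulVec_of_biorthogonal hbi,
      if_pos, smul_eq_mul, mul_one, Complex.ofReal_re, ciInf_const]
  · rw [hκ, le_div_iff₀ hlmax_pos]
    exact mul_le_one_of_smul_le_one (hQ.smul_sum_vecMulVec_le_one hbi) hv0 hGv

/-- Optimal minimax unambiguous discrimination: with `ωᵢ` the biorthogonal
family of `ψᵢ`, `G = ∑ᵢ |ωᵢ⟩⟨ωᵢ|`, and `κ = 1/λ_max(G)`, the family `Pᵢ = κ|ωᵢ⟩⟨ωᵢ|`,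
`P_{N+1} = I − κG` is an unambiguous POVM achieving `min_i ⟨ψᵢ, Pᵢψᵢ⟩ = κ`, and every
unambiguous POVM satisfies `min_i ⟨ψᵢ, Qᵢψᵢ⟩ ≤ κ`. -/
theorem optimal_minimax_unambiguous_discrimination
    {N : ℕ} (ψ ω : Fin N → (Fin N → ℂ))
    (hli : LinearIndependent ℂ ψ)
    (hspan : Submodule.span ℂ (Set.range ψ) = ⊤)
    (hunit : ∀ i, star (ψ i) ⬝ᵥ ψ i = 1)
    (hbi : ∀ i j, star (ω i) ⬝ᵥ ψ j = if i = j then 1 else 0)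
    (G : Matrix (Fin N) (Fin N) ℂ)
    (hG : G = ∑ i, vecMulVec (ω i) (star (ω i)))
    (lmax : ℝ)
    (hlmax : IsGreatest { x : ℝ | ∃ v : Fin N → ℂ, v ≠ 0 ∧ G *ᵥ v = (x : ℂ) • v } lmax)
    (κ : ℝ) (hκ : κ = 1 / lmax) :
    (IsUnambPOVM ψ (fun i => (κ : ℂ) • vecMulVec (ω i) (star (ω i))) (1 - (κ : ℂ) • G) ∧
      (⨅ i, (star (ψ i) ⬝ᵥ (((κ : ℂ) • vecMulVec (ω i) (star (ω i))) *ᵥ ψ i)).re) = κ) ∧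
    ∀ (Q : Fin N → Matrix (Fin N) (Fin N) ℂ) (Qinc : Matrix (Fin N) (Fin N) ℂ),
      IsUnambPOVM ψ Q Qinc →
        (⨅ i, (star (ψ i) ⬝ᵥ (Q i *ᵥ ψ i)).re) ≤ κ :=
  optimal_minimax_unambiguous_discrimination_general ψ ω hbi G hG lmax hlmax κ hκ
end

section
/- Let ψ₁, …, ψ_N be a linearly independent family of unit vectors spanning ℂ^N with biorthogonal family ω₁, …, ω_N, let G = ∑ᵢ |ωᵢ⟩⟨ωᵢ|, κ = 1/λ_max(G), and let (P₁, …, P_N, P_{N+1}) be the optimal unambiguous minimax POVM Pᵢ = κ·|ωᵢ⟩⟨ωᵢ| (i ≤ N), P_{N+1} = I − κ·G. Then there exists an unambiguous POVM (Q₁,…,Q_{N+1}) different from (P₁,…,P_{N+1}) with min_{i≤N} ⟨ψᵢ, Qᵢ ψᵢ⟩ = κ if and only if there exists i ∈ {1,…,N} and ε > 0 such that ε·|ωᵢ⟩⟨ωᵢ| ≤ P_{N+1} in the positive semidefinite order (equivalently, ωᵢ lies in the range of P_{N+1}). -/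
/-!
Since the `ωᵢ` are biorthogonal to a basis, a positive semidefinite `A` with
`⟨ψⱼ, A ψⱼ⟩ = 0` for all `j ≠ k` annihilates these `ψⱼ` and is therefore `c |ωₖ⟩⟨ωₖ|` with
`c ≥ 0`. Unambiguous POVMs are thus the coefficient vectors `c ≥ 0` with
`1 - ∑ cₖ |ωₖ⟩⟨ωₖ| ≥ 0`, their value is `min cₖ`, and `P` is `c ≡ κ`.
An optimal `c ≠ κ` has some `cᵢ > κ`, and then
`P_{N+1} - (cᵢ - κ) |ωᵢ⟩⟨ωᵢ| = Q_{N+1} + ∑_{k ≠ i} (cₖ - κ) |ωₖ⟩⟨ωₖ| ≥ 0`.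
Conversely, raising the `i`-th coefficient of `P` to `κ + ε` gives a second optimal POVM as
soon as another coordinate keeps the minimum at `κ`. For `N = 1` the hypothesis cannot hold:
a top eigenvector `v` of `G` satisfies `P_{N+1} v = 0`, which forces `⟨ωᵢ, v⟩ = 0`.
-/

open Matrix ComplexOrder

section RankOne

variable {n ι : Type*} [Fintype n]

lemma star_dotProduct_vecMulVec_mulVec (a x y : n → ℂ) :
    star x ⬝ᵥ (vecMulVec a (star a) *ᵥ y) = star (star a ⬝ᵥ x) * (star a ⬝ᵥ y) := by
  rw [vecMulVec_mulVec, op_smul_eq_smul, dotProduct_smul, smul_eq_mul, ← star_dotProduct,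
    mul_comm]

lemma posSemidef_smul_vecMulVec_self_star {r : ℝ} (hr : 0 ≤ r) (a : n → ℂ) :
    ((r : ℂ) • vecMulVec a (star a)).PosSemidef :=
  (posSemidef_vecMulVec_self_star a).smul (Complex.zero_le_real.2 hr)

lemma Matrix.PosSemidef.exists_eq_smul_vecMulVec {A : Matrix n n ℂ} (hA : A.PosSemidef)
    {u w x : n → ℂ} (hA_eq : A = vecMulVec u (star w)) (hwx : star w ⬝ᵥ x = 1) :
    ∃ c : ℝ, 0 ≤ c ∧ A = (c : ℂ) • vecMulVec w (star w) := by
  have hAx : A *ᵥ x = u := by simp [hA_eq, vecMulVec_mulVec, hwx]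
  have hA_eq' : A = vecMulVec w (star u) := by
    rw [← hA.isHermitian.eq, hA_eq, conjTranspose_vecMulVec, star_star]
  have hz : 0 ≤ star x ⬝ᵥ u := hAx ▸ hA.dotProduct_mulVec_nonneg x
  set c := (star x ⬝ᵥ u).re
  have hu : u = (c : ℂ) • w := by
    calc u = A *ᵥ x := hAx.symm
      _ = star (star x ⬝ᵥ u) • w := by simp [hA_eq', vecMulVec_mulVec, ← star_dotProduct]
      _ = (c : ℂ) • w := by
        rw [Complex.eq_re_of_ofReal_le (r := 0) (z := star x ⬝ᵥ u) (by simpa using hz),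
          Complex.star_def, Complex.conj_ofReal]
  refine ⟨c, (Complex.nonneg_iff.1 hz).1, ?_⟩
  rw [hA_eq', hu, star_smul, vecMulVec_smul, Complex.star_def, Complex.conj_ofReal]

lemma pos_of_sum_vecMulVec_mulVec_eq_smul [Fintype ι] {ω : ι → n → ℂ}
    (hω : ∀ v, (∀ k, star (ω k) ⬝ᵥ v = 0) → v = 0) {v : n → ℂ} (hv : v ≠ 0) {μ : ℝ}
    (h : (∑ k, vecMulVec (ω k) (star (ω k))) *ᵥ v = (μ : ℂ) • v) : 0 < μ := by
  obtain ⟨k, hk⟩ : ∃ k, star (ω k) ⬝ᵥ v ≠ 0 := by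
    by_contra! h0
    exact hv (hω v h0)
  have hquad : 0 < star v ⬝ᵥ ((∑ k, vecMulVec (ω k) (star (ω k))) *ᵥ v) := by
    simp only [sum_mulVec, dotProduct_sum, star_dotProduct_vecMulVec_mulVec]
    exact Finset.sum_pos' (fun _ _ => star_mul_self_nonneg _)
      ⟨k, Finset.mem_univ k, star_mul_self_pos (.of_ne_zero hk)⟩
  have hs : 0 < star v ⬝ᵥ v := dotProduct_star_self_pos_iff.2 hv
  rw [h, dotProduct_smul, Complex.eq_re_of_ofReal_le (r := 0) (z := star v ⬝ᵥ v) (by simp [hs.le]),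
    smul_eq_mul, ← Complex.ofReal_mul, Complex.zero_lt_real] at hquad
  exact pos_of_mul_pos_left hquad (Complex.pos_iff.1 hs).1.le

lemma dotProduct_eq_zero_of_posSemidef_sub {A : Matrix n n ℂ} {a v : n → ℂ} {ε : ℝ}
    (hε : 0 < ε) (hAv : A *ᵥ v = 0) (h : (A - (ε : ℂ) • vecMulVec a (star a)).PosSemidef) :
    star a ⬝ᵥ v = 0 := by
  have h0 := h.dotProduct_mulVec_nonneg v
  rw [sub_mulVec, hAv, zero_sub, smul_mulVec, dotProduct_neg, dotProduct_smul, smul_eq_mul,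
    star_dotProduct_vecMulVec_mulVec, neg_nonneg] at h0
  have hzero := le_antisymm h0 (mul_nonneg (Complex.zero_le_real.2 hε.le)
    (star_mul_self_nonneg (star a ⬝ᵥ v)))
  simpa [hε.ne'] using hzero

lemma posSemidef_one_sub_smul_sum_sub [DecidableEq n] [Fintype ι] [DecidableEq ι]
    {ω : ι → n → ℂ} {c : ι → ℝ} {κ : ℝ} (hc : ∀ k, κ ≤ c k)
    (h : (1 - ∑ k, (c k : ℂ) • vecMulVec (ω k) (star (ω k))).PosSemidef) (i : ι) :
    (1 - (κ : ℂ) • ∑ k, vecMulVec (ω k) (star (ω k))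
      - ((c i - κ : ℝ) : ℂ) • vecMulVec (ω i) (star (ω i))).PosSemidef := by
  have hsplit : 1 - (κ : ℂ) • ∑ k, vecMulVec (ω k) (star (ω k))
      - ((c i - κ : ℝ) : ℂ) • vecMulVec (ω i) (star (ω i))
      = (1 - ∑ k, (c k : ℂ) • vecMulVec (ω k) (star (ω k)))
        + ∑ k ∈ Finset.univ.erase i, ((c k - κ : ℝ) : ℂ) • vecMulVec (ω k) (star (ω k)) := by
    rw [Finset.sum_erase_eq_sub (Finset.mem_univ i)]
    simp only [Complex.ofReal_sub, sub_smul, Finset.sum_sub_distrib, Finset.smul_sum]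
    abel
  rw [hsplit]
  exact h.add (posSemidef_sum _ fun k _ =>
    posSemidef_smul_vecMulVec_self_star (sub_nonneg.2 (hc k)) _)

end RankOne

section Biorthogonal

variable {n : Type*} [Fintype n] [DecidableEq n] {ψ ω : n → n → ℂ}

lemma sum_vecMulVec_eq_one (hspan : Submodule.span ℂ (Set.range ψ) = ⊤)
    (hbi : ∀ i j, star (ω i) ⬝ᵥ ψ j = if i = j then 1 else 0) :
    ∑ j, vecMulVec (ψ j) (star (ω j)) = 1 := by
  apply Matrix.toLin'.injective
  refine LinearMap.ext_on_range hspan fun i => ?_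
  simp [vecMulVec_mulVec, hbi]

lemma eq_zero_of_forall_dotProduct_eq_zero (hspan : Submodule.span ℂ (Set.range ψ) = ⊤)
    (hbi : ∀ i j, star (ω i) ⬝ᵥ ψ j = if i = j then 1 else 0) {v : n → ℂ}
    (hv : ∀ k, star (ω k) ⬝ᵥ v = 0) : v = 0 := by
  rw [← one_mulVec v, ← sum_vecMulVec_eq_one hspan hbi, sum_mulVec]
  simp [vecMulVec_mulVec, hv]

lemma eq_vecMulVec_of_mulVec_eq_zero (hspan : Submodule.span ℂ (Set.range ψ) = ⊤)
    (hbi : ∀ i j, star (ω i) ⬝ᵥ ψ j = if i = j then 1 else 0) {A : Matrix n n ℂ} {k : n}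
    (hA : ∀ j ≠ k, A *ᵥ ψ j = 0) : A = vecMulVec (A *ᵥ ψ k) (star (ω k)) :=
  calc A = A * ∑ j, vecMulVec (ψ j) (star (ω j)) := by
        rw [sum_vecMulVec_eq_one hspan hbi, mul_one]
    _ = ∑ j, vecMulVec (A *ᵥ ψ j) (star (ω j)) := by simp only [Finset.mul_sum, mul_vecMulVec]
    _ = _ := Finset.sum_eq_single k (fun j _ hj => by simp [hA j hj]) (by simp)

lemma Matrix.PosSemidef.exists_eq_smul_vecMulVec_of_biorthogonal
    (hspan : Submodule.span ℂ (Set.range ψ) = ⊤)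
    (hbi : ∀ i j, star (ω i) ⬝ᵥ ψ j = if i = j then 1 else 0) {A : Matrix n n ℂ}
    (hA : A.PosSemidef) {k : n} (h : ∀ j ≠ k, star (ψ j) ⬝ᵥ (A *ᵥ ψ j) = 0) :
    ∃ c : ℝ, 0 ≤ c ∧ A = (c : ℂ) • vecMulVec (ω k) (star (ω k)) :=
  hA.exists_eq_smul_vecMulVec (eq_vecMulVec_of_mulVec_eq_zero hspan hbi fun j hj =>
    (hA.dotProduct_mulVec_zero_iff _).1 (h j hj)) (x := ψ k) (by rw [hbi, if_pos rfl])

lemma star_dotProduct_smul_vecMulVec_mulVec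
    (hbi : ∀ i j, star (ω i) ⬝ᵥ ψ j = if i = j then 1 else 0) (r : ℂ) (k j : n) :
    star (ψ j) ⬝ᵥ ((r • vecMulVec (ω k) (star (ω k))) *ᵥ ψ j) = if k = j then r else 0 := by
  rw [smul_mulVec, dotProduct_smul, star_dotProduct_vecMulVec_mulVec, hbi]
  split_ifs <;> simp

end Biorthogonal

section UnambiguousPOVM

variable {N : ℕ} {ψ ω : Fin N → Fin N → ℂ}

lemma isUnambPOVM_smul_vecMulVec_s14 (hbi : ∀ i j, star (ω i) ⬝ᵥ ψ j = if i = j then 1 else 0)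
    {c : Fin N → ℝ} (hc : ∀ k, 0 ≤ c k)
    (h : (1 - ∑ k, (c k : ℂ) • vecMulVec (ω k) (star (ω k))).PosSemidef) :
    IsUnambPOVM ψ (fun k => (c k : ℂ) • vecMulVec (ω k) (star (ω k)))
      (1 - ∑ k, (c k : ℂ) • vecMulVec (ω k) (star (ω k))) :=
  ⟨fun k => posSemidef_smul_vecMulVec_self_star (hc k) _, h, add_sub_cancel _ _,
    fun i j hij => by rw [star_dotProduct_smul_vecMulVec_mulVec hbi, if_neg hij.symm]⟩

lemma IsUnambPOVM.exists_eq_smul_vecMulVec (hspan : Submodule.span ℂ (Set.range ψ) = ⊤)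
    (hbi : ∀ i j, star (ω i) ⬝ᵥ ψ j = if i = j then 1 else 0)
    {Q : Fin N → Matrix (Fin N) (Fin N) ℂ} {Qinc : Matrix (Fin N) (Fin N) ℂ}
    (hQ : IsUnambPOVM ψ Q Qinc) :
    ∃ c : Fin N → ℝ, (∀ k, 0 ≤ c k) ∧
      Q = (fun k => (c k : ℂ) • vecMulVec (ω k) (star (ω k))) ∧
      Qinc = 1 - ∑ k, (c k : ℂ) • vecMulVec (ω k) (star (ω k)) := by
  obtain ⟨hQpsd, -, hsum, hunamb⟩ := hQ
  choose c hc hQc using fun k =>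
    (hQpsd k).exists_eq_smul_vecMulVec_of_biorthogonal hspan hbi fun j hj => hunamb j k hj
  refine ⟨c, hc, funext hQc, ?_⟩
  rw [eq_sub_of_add_eq' hsum, Finset.sum_congr rfl fun k _ => hQc k]

lemma iInf_re_star_dotProduct_smul_vecMulVec_mulVec
    (hbi : ∀ i j, star (ω i) ⬝ᵥ ψ j = if i = j then 1 else 0) (c : Fin N → ℝ) :
    ⨅ i, (star (ψ i) ⬝ᵥ (((c i : ℂ) • vecMulVec (ω i) (star (ω i))) *ᵥ ψ i)).re = ⨅ i, c i := by
  congr 1 with i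
  rw [star_dotProduct_smul_vecMulVec_mulVec hbi, if_pos rfl, Complex.ofReal_re]

lemma exists_posSemidef_sub_of_isUnambPOVM (hspan : Submodule.span ℂ (Set.range ψ) = ⊤)
    (hbi : ∀ i j, star (ω i) ⬝ᵥ ψ j = if i = j then 1 else 0) {κ : ℝ}
    {Q : Fin N → Matrix (Fin N) (Fin N) ℂ} {Qinc : Matrix (Fin N) (Fin N) ℂ}
    (hQ : IsUnambPOVM ψ Q Qinc)
    (hne : ¬(Q = (fun i => (κ : ℂ) • vecMulVec (ω i) (star (ω i))) ∧
      Qinc = 1 - (κ : ℂ) • ∑ i, vecMulVec (ω i) (star (ω i))))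
    (hval : ⨅ i, (star (ψ i) ⬝ᵥ (Q i *ᵥ ψ i)).re = κ) :
    ∃ i, ∃ ε : ℝ, 0 < ε ∧ (1 - (κ : ℂ) • ∑ i, vecMulVec (ω i) (star (ω i))
      - (ε : ℂ) • vecMulVec (ω i) (star (ω i))).PosSemidef := by
  obtain ⟨c, -, rfl, rfl⟩ := hQ.exists_eq_smul_vecMulVec hspan hbi
  rw [iInf_re_star_dotProduct_smul_vecMulVec_mulVec hbi] at hval
  have hκc : ∀ k, κ ≤ c k := fun k => hval ▸ ciInf_le (Set.finite_range c).bddBelow k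
  obtain ⟨i, hi⟩ : ∃ i, c i ≠ κ := by
    by_contra! hcκ
    simp [hcκ, Finset.smul_sum] at hne
  exact ⟨i, c i - κ, sub_pos.2 ((hκc i).lt_of_ne' hi),
    posSemidef_one_sub_smul_sum_sub hκc hQ.2.1 i⟩

lemma exists_isUnambPOVM_of_posSemidef_sub
    (hbi : ∀ i j, star (ω i) ⬝ᵥ ψ j = if i = j then 1 else 0) {κ ε : ℝ} (hκ : 0 ≤ κ)
    (hε : 0 < ε) {i j : Fin N} (hji : j ≠ i)
    (h : (1 - (κ : ℂ) • ∑ i, vecMulVec (ω i) (star (ω i))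
      - (ε : ℂ) • vecMulVec (ω i) (star (ω i))).PosSemidef) :
    ∃ (Q : Fin N → Matrix (Fin N) (Fin N) ℂ) (Qinc : Matrix (Fin N) (Fin N) ℂ),
      IsUnambPOVM ψ Q Qinc ∧
      ¬(Q = (fun i => (κ : ℂ) • vecMulVec (ω i) (star (ω i))) ∧
        Qinc = 1 - (κ : ℂ) • ∑ i, vecMulVec (ω i) (star (ω i))) ∧
      ⨅ i, (star (ψ i) ⬝ᵥ (Q i *ᵥ ψ i)).re = κ := by
  set c : Fin N → ℝ := fun k => κ + if k = i then ε else 0 with hc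
  have hsum : 1 - ∑ k, (c k : ℂ) • vecMulVec (ω k) (star (ω k))
      = 1 - (κ : ℂ) • ∑ i, vecMulVec (ω i) (star (ω i))
        - (ε : ℂ) • vecMulVec (ω i) (star (ω i)) := by
    have hterm : ∀ k, (c k : ℂ) • vecMulVec (ω k) (star (ω k)) = (κ : ℂ) • vecMulVec (ω k)
        (star (ω k)) + if k = i then (ε : ℂ) • vecMulVec (ω k) (star (ω k)) else 0 := by
      intro k
      split_ifs with hk <;> simp [hc, hk, add_smul]
    rw [Finset.sum_congr rfl fun k _ => hterm k, Finset.sum_add_distrib, Finset.sum_ite_eq',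
      if_pos (Finset.mem_univ i), Finset.smul_sum]
    abel
  refine ⟨_, _, isUnambPOVM_smul_vecMulVec_s14 hbi (c := c) (fun k => ?_) (hsum ▸ h),
    fun ⟨hQ, _⟩ => ?_, ?_⟩
  · simp only [hc]
    split_ifs <;> linarith
  · have := congrArg (fun M => star (ψ i) ⬝ᵥ (M *ᵥ ψ i)) (congrFun hQ i)
    simp only [star_dotProduct_smul_vecMulVec_mulVec hbi, hc, ↓reduceIte] at this
    norm_cast at this
    linarith
  · have : Nonempty (Fin N) := ⟨i⟩
    rw [iInf_re_star_dotProduct_smul_vecMulVec_mulVec hbi]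
    refine le_antisymm ((ciInf_le (Set.finite_range c).bddBelow j).trans (by simp [hc, hji]))
      (le_ciInf fun k => ?_)
    simp only [hc]
    split_ifs <;> linarith

end UnambiguousPOVM

theorem optimal_unambiguous_povm_nonunique_iff_general
    {N : ℕ} (ψ ω : Fin N → (Fin N → ℂ))
    (hspan : Submodule.span ℂ (Set.range ψ) = ⊤)
    (hbi : ∀ i j, star (ω i) ⬝ᵥ ψ j = if i = j then 1 else 0)
    (G : Matrix (Fin N) (Fin N) ℂ)
    (hG : G = ∑ i, vecMulVec (ω i) (star (ω i)))
    (lmax : ℝ)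
    (hlmax : IsGreatest { x : ℝ | ∃ v : Fin N → ℂ, v ≠ 0 ∧ G *ᵥ v = (x : ℂ) • v } lmax)
    (κ : ℝ) (hκ : κ = 1 / lmax)
    (P : Fin N → Matrix (Fin N) (Fin N) ℂ) (Pinc : Matrix (Fin N) (Fin N) ℂ)
    (hP : P = fun i => (κ : ℂ) • vecMulVec (ω i) (star (ω i)))
    (hPinc : Pinc = 1 - (κ : ℂ) • G) :
    (∃ (Q : Fin N → Matrix (Fin N) (Fin N) ℂ) (Qinc : Matrix (Fin N) (Fin N) ℂ),
        IsUnambPOVM ψ Q Qinc ∧ ¬(Q = P ∧ Qinc = Pinc) ∧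
        (⨅ i, (star (ψ i) ⬝ᵥ (Q i *ᵥ ψ i)).re) = κ) ↔
      ∃ i, ∃ ε : ℝ, 0 < ε ∧ (Pinc - (ε : ℂ) • vecMulVec (ω i) (star (ω i))).PosSemidef := by
  subst hG hP hPinc
  obtain ⟨v, hv, hGv⟩ := hlmax.1
  have hlmax_pos : 0 < lmax := pos_of_sum_vecMulVec_mulVec_eq_smul
    (fun _ => eq_zero_of_forall_dotProduct_eq_zero hspan hbi) hv hGv
  refine ⟨fun ⟨Q, Qinc, hQ, hne, hval⟩ =>
    exists_posSemidef_sub_of_isUnambPOVM hspan hbi hQ hne hval, fun ⟨i, ε, hε, h⟩ => ?_⟩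
  obtain ⟨j, hji⟩ : ∃ j, j ≠ i := by
    by_contra! hsub
    have hPv : (1 - (κ : ℂ) • ∑ k, vecMulVec (ω k) (star (ω k))) *ᵥ v = 0 := by
      rw [sub_mulVec, one_mulVec, smul_mulVec, hGv, smul_smul, ← Complex.ofReal_mul, hκ,
        one_div_mul_cancel hlmax_pos.ne', Complex.ofReal_one, one_smul, sub_self]
    exact hv (eq_zero_of_forall_dotProduct_eq_zero hspan hbi fun k =>
      hsub k ▸ dotProduct_eq_zero_of_posSemidef_sub hε hPv h)
  exact exists_isUnambPOVM_of_posSemidef_sub hbi (hκ ▸ one_div_nonneg.2 hlmax_pos.le) hε hji h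

/-- Non-uniqueness criterion for the optimal minimax unambiguous POVM
`Pᵢ = κ|ωᵢ⟩⟨ωᵢ|`, `P_{N+1} = I − κG`: an unambiguous POVM different from it attaining the
optimal value `κ` exists if and only if `ε|ωᵢ⟩⟨ωᵢ| ≤ P_{N+1}` for some `i` and some `ε > 0`. -/
theorem optimal_unambiguous_povm_nonunique_iff
    {N : ℕ} (ψ ω : Fin N → (Fin N → ℂ))
    (hli : LinearIndependent ℂ ψ)
    (hspan : Submodule.span ℂ (Set.range ψ) = ⊤)
    (hunit : ∀ i, star (ψ i) ⬝ᵥ ψ i = 1)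
    (hbi : ∀ i j, star (ω i) ⬝ᵥ ψ j = if i = j then 1 else 0)
    (G : Matrix (Fin N) (Fin N) ℂ)
    (hG : G = ∑ i, vecMulVec (ω i) (star (ω i)))
    (lmax : ℝ)
    (hlmax : IsGreatest { x : ℝ | ∃ v : Fin N → ℂ, v ≠ 0 ∧ G *ᵥ v = (x : ℂ) • v } lmax)
    (κ : ℝ) (hκ : κ = 1 / lmax)
    (P : Fin N → Matrix (Fin N) (Fin N) ℂ) (Pinc : Matrix (Fin N) (Fin N) ℂ)
    (hP : P = fun i => (κ : ℂ) • vecMulVec (ω i) (star (ω i)))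
    (hPinc : Pinc = 1 - (κ : ℂ) • G) :
    (∃ (Q : Fin N → Matrix (Fin N) (Fin N) ℂ) (Qinc : Matrix (Fin N) (Fin N) ℂ),
        IsUnambPOVM ψ Q Qinc ∧ ¬(Q = P ∧ Qinc = Pinc) ∧
        (⨅ i, (star (ψ i) ⬝ᵥ (Q i *ᵥ ψ i)).re) = κ) ↔
      ∃ i, ∃ ε : ℝ, 0 < ε ∧ (Pinc - (ε : ℂ) • vecMulVec (ω i) (star (ω i))).PosSemidef :=
  optimal_unambiguous_povm_nonunique_iff_general ψ ω hspan hbi G hG lmax hlmax κ hκ P Pinc hP hPinc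
end
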